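/- arXiv:1707.06703 — 4 statements merged into one kernel-verified Lean document; each statement's English description precedes it below -/
import Mathlib

section
/- Let P be an orthogonal projection, T a self-adjoint involution, and U = (2P - I)T. Write P = M M* with M of full column rank and ψ = M* T M. Suppose ψ z = λ z with -1 < λ < 1, and let y = M z, λ = cos ζ, θ₊ = e^{iζ}. Then (T - θ₊ I) y is nonzero and U(T - θ₊ I) y = θ₊ (T - θ₊ I) y. -/
/-!
Since `M` has full column rank and `M Mᴴ` is idempotent, `Mᴴ M = 1`; hence `y = M z` satisfies
`P y = y` and `P (T y) = λ y`. On the span of `y` and `T y` the walk `U = (2P - 1) T` then acts by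
`U y = 2λ y - T y` and `U (T y) = y`, and `θ = e^{iζ}` is a root of `θ² - 2λθ + 1 = 0`, which makes
`T y - θ y` a `θ`-eigenvector of `U`. It is nonzero: otherwise `λ y = P T y = θ y`, so `λ = θ` would
have modulus one.
-/

open Matrix Complex

namespace Matrix

variable {l m n R : Type*} [Fintype m]

theorem mul_left_cancel_of_injective_mulVec [Semiring R] {A : Matrix l m R}
    (hA : Function.Injective A.mulVec) {B C : Matrix m n R} (h : A * B = A * C) : B = C :=
  ext_col fun j => hA (congrArg (col · j) h)

theorem conjTranspose_mul_self_eq_one_of_isIdempotentElem [Fintype n] [DecidableEq n] [Ring R]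
    [StarRing R] {M : Matrix m n R} (hM : Function.Injective M.mulVec)
    (hP : IsIdempotentElem (M * Mᴴ)) : Mᴴ * M = 1 := by
  have h₁ : Mᴴ * M * Mᴴ = Mᴴ :=
    mul_left_cancel_of_injective_mulVec hM (by simpa only [Matrix.mul_assoc] using hP.eq)
  have h₂ : M * (Mᴴ * M) = M := by
    simpa only [conjTranspose_mul, conjTranspose_conjTranspose, Matrix.mul_assoc]
      using congrArg conjTranspose h₁
  exact mul_left_cancel_of_injective_mulVec hM (h₂.trans (Matrix.mul_one M).symm)

end Matrix

section Szegedy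

variable {n : Type*} [Fintype n] [DecidableEq n]

theorem szegedy_walk_mulVec_eq_smul {R : Type*} [CommRing R] {P T : Matrix n n R}
    {y : n → R} {μ θ : R} (hT : T * T = 1) (hPy : P *ᵥ y = y) (hPTy : P *ᵥ (T *ᵥ y) = μ • y)
    (hθ : θ ^ 2 + 1 = 2 * μ * θ) :
    ((2 • P - 1) * T) *ᵥ ((T - θ • 1) *ᵥ y) = θ • ((T - θ • 1) *ᵥ y) := by
  have hTTy : T *ᵥ (T *ᵥ y) = y := by rw [mulVec_mulVec, hT, one_mulVec]
  simp only [← mulVec_mulVec, sub_mulVec, smul_mulVec, one_mulVec, mulVec_sub, mulVec_smul,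
    two_nsmul, add_mulVec, hTTy, hPy, hPTy]
  match_scalars
  · linear_combination hθ
  · ring

theorem sub_smul_one_mulVec_ne_zero {K : Type*} [Field K] {P T : Matrix n n K} {y : n → K}
    {μ θ : K} (hy : y ≠ 0) (hPy : P *ᵥ y = y) (hPTy : P *ᵥ (T *ᵥ y) = μ • y) (hμθ : μ ≠ θ) :
    (T - θ • 1) *ᵥ y ≠ 0 := by
  intro h
  have hTy : T *ᵥ y = θ • y := by
    rwa [sub_mulVec, smul_mulVec, one_mulVec, sub_eq_zero] at h
  have hy0 : (μ - θ) • y = 0 := by rw [sub_smul, ← hPTy, hTy, mulVec_smul, hPy, sub_self]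
  exact hμθ (sub_eq_zero.mp ((smul_eq_zero.mp hy0).resolve_right hy))

end Szegedy

theorem Complex.exp_mul_I_sq_add_one (x : ℂ) : exp (x * I) ^ 2 + 1 = 2 * cos x * exp (x * I) := by
  rw [two_cos, add_mul, sq, ← exp_add, ← exp_add, neg_mul, neg_add_cancel, exp_zero]

theorem stmt_5_general {m r : ℕ} (P T : Matrix (Fin m) (Fin m) ℂ) (M : Matrix (Fin m) (Fin r) ℂ)
    (hP : P * P = P)
    (hT : T * T = 1)
    (hPM : P = M * Mᴴ) (hM : Function.Injective M.mulVec)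
    (lam ζ : ℝ) (hlam1 : -1 < lam) (hlam2 : lam < 1) (hζ : lam = Real.cos ζ)
    (z : Fin r → ℂ) (hz : z ≠ 0)
    (hψ : (Mᴴ * T * M).mulVec z = (lam : ℂ) • z) :
    (T - Complex.exp (ζ * Complex.I) • 1).mulVec (M.mulVec z) ≠ 0 ∧
      ((2 • P - 1) * T).mulVec ((T - Complex.exp (ζ * Complex.I) • 1).mulVec (M.mulVec z)) =
        Complex.exp (ζ * Complex.I) •
          (T - Complex.exp (ζ * Complex.I) • 1).mulVec (M.mulVec z) := by
  subst hPM
  have hMM : Mᴴ * M = 1 := conjTranspose_mul_self_eq_one_of_isIdempotentElem hM hP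
  have hPy : (M * Mᴴ) *ᵥ (M *ᵥ z) = M *ᵥ z := by
    rw [mulVec_mulVec, Matrix.mul_assoc, hMM, Matrix.mul_one]
  have hPTy : (M * Mᴴ) *ᵥ (T *ᵥ (M *ᵥ z)) = (lam : ℂ) • M *ᵥ z :=
    calc (M * Mᴴ) *ᵥ (T *ᵥ (M *ᵥ z)) = M *ᵥ ((Mᴴ * T * M) *ᵥ z) := by
          simp only [mulVec_mulVec, Matrix.mul_assoc]
      _ = (lam : ℂ) • M *ᵥ z := by rw [hψ, mulVec_smul]
  have hθ : exp (ζ * I) ^ 2 + 1 = 2 * (lam : ℂ) * exp (ζ * I) := by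
    rw [hζ, ofReal_cos, exp_mul_I_sq_add_one]
  have hlamθ : (lam : ℂ) ≠ exp (ζ * I) := fun h => by
    have habs : |lam| = 1 := by
      rw [← Real.norm_eq_abs, ← norm_real, h, norm_exp_ofReal_mul_I]
    exact (abs_lt.mpr ⟨hlam1, hlam2⟩).ne habs
  have hy : M *ᵥ z ≠ 0 := fun h => hz (hM (by rw [h, mulVec_zero]))
  exact ⟨sub_smul_one_mulVec_ne_zero hy hPy hPTy hlamθ, szegedy_walk_mulVec_eq_smul hT hPy hPTy hθ⟩

theorem stmt_5 {m r : ℕ} (P T : Matrix (Fin m) (Fin m) ℂ) (M : Matrix (Fin m) (Fin r) ℂ)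
    (hP : P * P = P) (hPh : Pᴴ = P)
    (hT : T * T = 1) (hTh : Tᴴ = T)
    (hPM : P = M * Mᴴ) (hM : Function.Injective M.mulVec)
    (lam ζ : ℝ) (hlam1 : -1 < lam) (hlam2 : lam < 1) (hζ : lam = Real.cos ζ)
    (z : Fin r → ℂ) (hz : z ≠ 0)
    (hψ : (Mᴴ * T * M).mulVec z = (lam : ℂ) • z) :
    (T - Complex.exp (ζ * Complex.I) • 1).mulVec (M.mulVec z) ≠ 0 ∧
      ((2 • P - 1) * T).mulVec ((T - Complex.exp (ζ * Complex.I) • 1).mulVec (M.mulVec z)) =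
        Complex.exp (ζ * Complex.I) •
          (T - Complex.exp (ζ * Complex.I) • 1).mulVec (M.mulVec z) :=
  stmt_5_general P T M hP hT hPM hM lam ζ hlam1 hlam2 hζ z hz hψ
end

section
/- Let P be an orthogonal projection, Q an orthogonal projection, T = 2Q - I, and U = (2P - I)T. If x is a nonzero vector with P x = 0 and P T x = 0 and Q x ≠ x, then (I - Q)x is an eigenvector of U with eigenvalue 1. -/
/-! With `T = 2Q - 1` and `y = (1 - Q)x`, idempotence of `Q` gives `T y = -y`, while
`2y = x - T x` is killed by `P`, so `P y = 0` and `(2P - 1)(-y) = y`. -/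

open Matrix

theorem IsIdempotentElem.two_nsmul_sub_one_mul_one_sub {A : Type*} [Ring A] {q : A}
    (hq : IsIdempotentElem q) : (2 • q - 1) * (1 - q) = -(1 - q) := by
  have hqq : q * q = q := hq
  simp only [two_nsmul, sub_mul, add_mul, mul_sub, mul_one, one_mul, hqq]
  abel

namespace Matrix

variable {n R : Type*} [Fintype n] [DecidableEq n] [Ring R]

theorem two_nsmul_sub_one_mulVec_of_mulVec_eq_zero {P : Matrix n n R} {y : n → R}
    (hPy : P *ᵥ y = 0) : (2 • P - 1) *ᵥ y = -y := by
  rw [sub_mulVec, smul_mulVec, hPy, smul_zero, one_mulVec, zero_sub]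

theorem mulVec_one_sub_mulVec_eq_zero [IsAddTorsionFree R] {P Q : Matrix n n R} {x : n → R}
    (hPx : P *ᵥ x = 0) (hPTx : P *ᵥ ((2 • Q - 1) *ᵥ x) = 0) : P *ᵥ ((1 - Q) *ᵥ x) = 0 := by
  have h2 : 2 • (P *ᵥ ((1 - Q) *ᵥ x)) = 0 := by
    rw [← mulVec_smul, ← smul_mulVec,
      show 2 • (1 - Q) = 1 - (2 • Q - 1) by rw [two_nsmul, two_nsmul]; abel,
      sub_mulVec, one_mulVec, mulVec_sub, hPx, hPTx, sub_zero]
  exact (nsmul_eq_zero_iff_right two_ne_zero).mp h2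

end Matrix

theorem stmt_7_general {m : ℕ} (P Q : Matrix (Fin m) (Fin m) ℂ)
    (hQ : Q * Q = Q)
    (x : Fin m → ℂ)
    (hPx : P.mulVec x = 0) (hPTx : P.mulVec ((2 • Q - 1).mulVec x) = 0)
    (hQx : Q.mulVec x ≠ x) :
    ((1 : Matrix (Fin m) (Fin m) ℂ) - Q).mulVec x ≠ 0 ∧
      ((2 • P - 1) * (2 • Q - 1)).mulVec (((1 : Matrix (Fin m) (Fin m) ℂ) - Q).mulVec x) =
        ((1 : Matrix (Fin m) (Fin m) ℂ) - Q).mulVec x := by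
  refine ⟨?_, ?_⟩
  · rw [sub_mulVec, one_mulVec, sub_ne_zero]
    exact hQx.symm
  · have hTy : (2 • Q - 1) *ᵥ ((1 - Q) *ᵥ x) = -((1 - Q) *ᵥ x) := by
      rw [mulVec_mulVec, IsIdempotentElem.two_nsmul_sub_one_mul_one_sub hQ, neg_mulVec]
    rw [← mulVec_mulVec, hTy, mulVec_neg,
      two_nsmul_sub_one_mulVec_of_mulVec_eq_zero (mulVec_one_sub_mulVec_eq_zero hPx hPTx),
      neg_neg]

theorem stmt_7 {m : ℕ} (P Q : Matrix (Fin m) (Fin m) ℂ)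
    (hP : P * P = P) (hPh : Pᴴ = P) (hQ : Q * Q = Q) (hQh : Qᴴ = Q)
    (x : Fin m → ℂ) (hx : x ≠ 0)
    (hPx : P.mulVec x = 0) (hPTx : P.mulVec ((2 • Q - 1).mulVec x) = 0)
    (hQx : Q.mulVec x ≠ x) :
    ((1 : Matrix (Fin m) (Fin m) ℂ) - Q).mulVec x ≠ 0 ∧
      ((2 • P - 1) * (2 • Q - 1)).mulVec (((1 : Matrix (Fin m) (Fin m) ℂ) - Q).mulVec x) =
        ((1 : Matrix (Fin m) (Fin m) ℂ) - Q).mulVec x :=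
  stmt_7_general P Q hQ x hPx hPTx hQx
end

section
/- Let n be an odd positive integer, a + b = n with a ≠ b, and X = X(Z_{2n}, ±{a,b}) the circulant graph. For each u ∈ Z_{2n}, the vector x_u = e_u - e_{u+n} satisfies A x_u = 0, where A is the adjacency matrix of X. Moreover the vectors x_0, ..., x_{n-1} form a basis of the 0-eigenspace of A. -/
open Matrix SimpleGraph

instance twoMulNeZero {n : ℕ} [NeZero n] : NeZero (2 * n) :=
  ⟨by have := NeZero.ne n; omega⟩

/-- The circulant graph `X(Z_{2n}, ±{a,b})`: `u ~ v` iff `v - u ∈ {a, b, -a, -b}`. -/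
def circulant (n a b : ℕ) : SimpleGraph (ZMod (2 * n)) :=
  SimpleGraph.fromRel (fun u v => v - u = (a : ZMod (2 * n)) ∨ v - u = (b : ZMod (2 * n)))

instance (n a b : ℕ) : DecidableRel (circulant n a b).Adj := fun u v =>
  decidable_of_iff _ (SimpleGraph.fromRel_adj _ u v).symm

/-- The vector `e_u - e_{u+n}` on the vertices of `X(Z_{2n}, ±{a,b})`. -/
def antipodalVec (n : ℕ) (u : ZMod (2 * n)) : ZMod (2 * n) → ℝ :=
  Pi.single u 1 - Pi.single (u + (n : ZMod (2 * n))) 1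

/-!
Since `a + b = n`, the connection set `±{a, b} = {±a, ±a + n}` of `X(ℤ/2n, ±{a, b})` is
invariant under translation by `n`, so `u` and `u + n` have the same neighbours and
`e_u - e_{u+n}` lies in the kernel. Conversely, for `x` in the kernel put
`y v = x v + x (v + n)`; the kernel equation at `v + a` reads `y (v + 2a) = -y v`. As `n` is odd
and `n • 2a = 0`, this gives `y = -y`, so `y = 0`: `x` is antiperiodic with antiperiod `n`, and
such an `x` equals `∑_{i < n} x i • (e_i - e_{i+n})`.
-/

open Finset Function

namespace ZMod

variable {n : ℕ}

lemma natCast_add_self_eq_zero : (n : ZMod (2 * n)) + n = 0 := by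
  rw [← Nat.cast_add, ← two_mul, natCast_self]

lemma natCast_ne_zero_of_pos_of_lt {m k : ℕ} (h0 : 0 < k) (hk : k < m) : (k : ZMod m) ≠ 0 := by
  rw [Ne, natCast_eq_zero_iff]
  exact fun h => absurd (Nat.le_of_dvd h0 h) (by omega)

lemma natCast_inj_of_lt {m i j : ℕ} (hi : i < m) (hj : j < m) (h : (i : ZMod m) = j) : i = j := by
  rwa [natCast_eq_natCast_iff', Nat.mod_eq_of_lt hi, Nat.mod_eq_of_lt hj] at h

end ZMod

section Antipodal

variable {n : ℕ}

lemma antipodalVec_antiperiodic (u : ZMod (2 * n)) : Antiperiodic (antipodalVec n u) n := by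
  intro v
  have hu : v + n = u ↔ v = u + n := by
    constructor <;> intro h
    · linear_combination h - ZMod.natCast_add_self_eq_zero
    · linear_combination h + ZMod.natCast_add_self_eq_zero
  simp only [antipodalVec, Pi.sub_apply, Pi.single_apply, hu, add_left_inj]
  ring

lemma antipodalVec_natCast_apply_natCast (i j : Fin n) :
    antipodalVec n (i : ℕ) (j : ℕ) = (Pi.single i 1 : Fin n → ℝ) j := by
  have hji : ((j : ℕ) : ZMod (2 * n)) = (i : ℕ) ↔ j = i :=
    ⟨fun h => Fin.ext (ZMod.natCast_inj_of_lt (by omega) (by omega) h), fun h => h ▸ rfl⟩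
  have hjn : ((j : ℕ) : ZMod (2 * n)) ≠ (i : ℕ) + n := by
    rw [← Nat.cast_add]
    exact fun h => absurd (ZMod.natCast_inj_of_lt (by omega) (by omega) h) (by omega)
  simp [antipodalVec, Pi.single_apply, hji, hjn]

lemma eq_zero_of_antiperiodic_of_forall_fin [NeZero n] {M : Type*} [NegZeroClass M]
    {f : ZMod (2 * n) → M} (hf : Antiperiodic f n) (h : ∀ i : Fin n, f (i : ℕ) = 0) :
    f = 0 := by
  funext v
  obtain hv | hv := lt_or_ge v.val n
  · rw [← ZMod.natCast_zmod_val v]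
    exact h ⟨_, hv⟩
  · have hv' : v = ((v.val - n : ℕ) : ZMod (2 * n)) + n := by
      rw [← Nat.cast_add, Nat.sub_add_cancel hv, ZMod.natCast_zmod_val]
    rw [hv', hf, h ⟨v.val - n, by have := ZMod.val_lt v; omega⟩, neg_zero, Pi.zero_apply]

lemma linearIndependent_antipodalVec :
    LinearIndependent ℝ (fun u : Fin n => antipodalVec n (u : ℕ)) := by
  apply LinearIndependent.of_comp
    (LinearMap.funLeft ℝ ℝ fun i : Fin n => ((i : ℕ) : ZMod (2 * n)))
  convert (Pi.basisFun ℝ (Fin n)).linearIndependent with i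
  ext j
  simp [LinearMap.funLeft_apply, antipodalVec_natCast_apply_natCast]

lemma mem_span_antipodalVec_of_antiperiodic [NeZero n] {x : ZMod (2 * n) → ℝ}
    (hx : Antiperiodic x n) :
    x ∈ Submodule.span ℝ (Set.range fun u : Fin n => antipodalVec n (u : ℕ)) := by
  have hsum : x = ∑ i : Fin n, x (i : ℕ) • antipodalVec n (i : ℕ) := by
    rw [← sub_eq_zero]
    apply eq_zero_of_antiperiodic_of_forall_fin
    · intro v
      simp only [Pi.sub_apply, Finset.sum_apply, Pi.smul_apply, smul_eq_mul, hx v,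
        antipodalVec_antiperiodic _ v, mul_neg, Finset.sum_neg_distrib]
      ring
    · intro j
      simp [Finset.sum_apply, antipodalVec_natCast_apply_natCast, Pi.single_apply]
  rw [hsum]
  exact Submodule.sum_mem _ fun i _ => Submodule.smul_mem _ _ (Submodule.subset_span ⟨i, rfl⟩)

end Antipodal

lemma SimpleGraph.adjMatrix_mulVec_single_sub_single_eq_zero {V R : Type*} [Fintype V]
    [DecidableEq V] [NonAssocRing R] (G : SimpleGraph V) [DecidableRel G.Adj] {u u' : V}
    (h : G.neighborSet u = G.neighborSet u') :
    G.adjMatrix R *ᵥ (Pi.single u 1 - Pi.single u' 1) = 0 := by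
  ext w
  have hw : G.Adj w u ↔ G.Adj w u' := by
    simpa only [mem_neighborSet, G.adj_comm u w, G.adj_comm u' w] using Set.ext_iff.mp h w
  rw [mulVec_sub, mulVec_single_one, mulVec_single_one]
  simp [hw]

section Circulant

variable {n a b : ℕ}

lemma circulant_adj_iff (ha : 0 < a) (hb : 0 < b) (hsum : a + b = n) {u v : ZMod (2 * n)} :
    (circulant n a b).Adj u v ↔ v = u + a ∨ v = u + a + n ∨ v = u - a ∨ v = u - a + n := by
  have hnn : (n : ZMod (2 * n)) + n = 0 := ZMod.natCast_add_self_eq_zero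
  have hb' : (b : ZMod (2 * n)) = n - a := by rw [← hsum]; push_cast; ring
  have ha0 : (a : ZMod (2 * n)) ≠ 0 := ZMod.natCast_ne_zero_of_pos_of_lt ha (by omega)
  have han0 : ((a + n : ℕ) : ZMod (2 * n)) ≠ 0 :=
    ZMod.natCast_ne_zero_of_pos_of_lt (by omega) (by omega)
  have hb0 : (n - a : ZMod (2 * n)) ≠ 0 := hb' ▸ ZMod.natCast_ne_zero_of_pos_of_lt hb (by omega)
  push_cast at han0
  simp only [_root_.circulant, fromRel_adj, hb']
  constructor
  · rintro ⟨-, (h | h) | (h | h)⟩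
    · left; linear_combination h
    · right; right; right; linear_combination h
    · right; right; left; linear_combination -h
    · right; left; linear_combination -h - hnn
  · rintro (rfl | rfl | rfl | rfl)
    · exact ⟨fun h => ha0 (by linear_combination -h), Or.inl (Or.inl (by ring))⟩
    · exact ⟨fun h => han0 (by linear_combination -h),
        Or.inr (Or.inr (by linear_combination -hnn))⟩
    · exact ⟨fun h => ha0 (by linear_combination h), Or.inr (Or.inl (by ring))⟩
    · exact ⟨fun h => hb0 (by linear_combination -h), Or.inl (Or.inr (by ring))⟩

lemma circulant_neighborSet_add_natCast (ha : 0 < a) (hb : 0 < b) (hsum : a + b = n)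
    (u : ZMod (2 * n)) :
    (circulant n a b).neighborSet (u + n) = (circulant n a b).neighborSet u := by
  have hnn : (n : ZMod (2 * n)) + n = 0 := ZMod.natCast_add_self_eq_zero
  ext v
  simp only [mem_neighborSet, circulant_adj_iff ha hb hsum, add_right_comm u (n : ZMod (2 * n)),
    add_sub_right_comm u (n : ZMod (2 * n)), add_assoc _ (n : ZMod (2 * n)) (n : ZMod (2 * n)),
    hnn, add_zero]
  tauto

lemma circulant_neighborFinset [NeZero n] (ha : 0 < a) (hb : 0 < b) (hsum : a + b = n)
    (w : ZMod (2 * n)) :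
    (circulant n a b).neighborFinset w = {w + a, w + a + n, w - a, w - a + n} := by
  ext v
  simp [circulant_adj_iff ha hb hsum]

lemma circulant_adjMatrix_mulVec_apply [NeZero n] (ha : 0 < a) (hb : 0 < b) (hsum : a + b = n)
    (hodd : Odd n) (x : ZMod (2 * n) → ℝ) (w : ZMod (2 * n)) :
    ((circulant n a b).adjMatrix ℝ *ᵥ x) w =
      x (w + a) + x (w + a + n) + (x (w - a) + x (w - a + n)) := by
  obtain ⟨k, hk⟩ := hodd
  have hnn : (n : ZMod (2 * n)) + n = 0 := ZMod.natCast_add_self_eq_zero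
  have hn0 : (n : ZMod (2 * n)) ≠ 0 := ZMod.natCast_ne_zero_of_pos_of_lt (by omega) (by omega)
  have h2a : ((a + a : ℕ) : ZMod (2 * n)) ≠ 0 :=
    ZMod.natCast_ne_zero_of_pos_of_lt (by omega) (by omega)
  have h2an : ((a + a + n : ℕ) : ZMod (2 * n)) ≠ 0 := by
    rw [Ne, ZMod.natCast_eq_zero_iff]
    -- `2n ∣ 2a + n` is impossible, as `2a + n` is odd
    intro h
    have := (dvd_mul_right 2 n).trans h
    omega
  push_cast at h2a h2an
  rw [adjMatrix_mulVec_apply, circulant_neighborFinset ha hb hsum, sum_insert, sum_insert,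
    sum_insert, sum_singleton]
  · ring
  all_goals simp only [mem_insert, mem_singleton, not_or]
  · exact fun h => hn0 (by linear_combination -h)
  · exact ⟨fun h => h2an (by linear_combination h), fun h => h2a (by linear_combination h)⟩
  · exact ⟨fun h => hn0 (by linear_combination -h), fun h => h2a (by linear_combination h),
      fun h => h2an (by linear_combination h + hnn)⟩

lemma antiperiodic_of_circulant_mulVec_eq_zero [NeZero n] (ha : 0 < a) (hb : 0 < b)
    (hsum : a + b = n) (hodd : Odd n) {x : ZMod (2 * n) → ℝ}
    (hx : (circulant n a b).adjMatrix ℝ *ᵥ x = 0) :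
    Antiperiodic x n := by
  have hy : Antiperiodic (fun v => x v + x (v + n)) (a + a) := fun v => by
    have h := congrFun hx (v + a)
    rw [circulant_adjMatrix_mulVec_apply ha hb hsum hodd, add_sub_cancel_right, Pi.zero_apply,
      add_assoc v] at h
    linarith
  obtain ⟨k, hk⟩ := hodd
  have hy0 : Antiperiodic (fun v => x v + x (v + n)) 0 := by
    have hper : n • ((a : ZMod (2 * n)) + a) = 0 := by
      rw [nsmul_eq_mul]
      linear_combination (a : ZMod (2 * n)) * ZMod.natCast_add_self_eq_zero
    simpa only [← hk, hper] using hy.odd_nsmul_antiperiodic k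
  intro v
  have h := hy0 v
  simp only [add_zero] at h
  linarith

end Circulant

theorem stmt_16_general (n a b : ℕ) [NeZero n] (hodd : Odd n)
    (ha : 0 < a) (hb : 0 < b) (hsum : a + b = n) :
    (∀ u : ZMod (2 * n),
        ((circulant n a b).adjMatrix ℝ).mulVec (antipodalVec n u) = 0) ∧
      LinearIndependent ℝ (fun u : Fin n => antipodalVec n ((u : ℕ) : ZMod (2 * n))) ∧
      Submodule.span ℝ (Set.range fun u : Fin n => antipodalVec n ((u : ℕ) : ZMod (2 * n))) =
        LinearMap.ker (((circulant n a b).adjMatrix ℝ).mulVecLin) := by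
  have hker (u : ZMod (2 * n)) : (circulant n a b).adjMatrix ℝ *ᵥ antipodalVec n u = 0 :=
    adjMatrix_mulVec_single_sub_single_eq_zero _
      (circulant_neighborSet_add_natCast ha hb hsum u).symm
  refine ⟨hker, linearIndependent_antipodalVec, le_antisymm ?_ fun x hx => ?_⟩
  · rw [Submodule.span_le]
    rintro _ ⟨u, rfl⟩
    exact hker _
  · exact mem_span_antipodalVec_of_antiperiodic
      (antiperiodic_of_circulant_mulVec_eq_zero ha hb hsum hodd hx)

theorem stmt_16 (n a b : ℕ) [NeZero n] (hodd : Odd n)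
    (ha : 0 < a) (hb : 0 < b) (hab : a ≠ b) (hsum : a + b = n) :
    (∀ u : ZMod (2 * n),
        ((circulant n a b).adjMatrix ℝ).mulVec (antipodalVec n u) = 0) ∧
      LinearIndependent ℝ (fun u : Fin n => antipodalVec n ((u : ℕ) : ZMod (2 * n))) ∧
      Submodule.span ℝ (Set.range fun u : Fin n => antipodalVec n ((u : ℕ) : ZMod (2 * n))) =
        LinearMap.ker (((circulant n a b).adjMatrix ℝ).mulVecLin) :=
  stmt_16_general n a b hodd ha hb hsum
end

section
/- Let n be an odd positive integer and a, b distinct positive integers with a + b = n. Let X = X(Z_{2n}, ±{a,b}) be the 4-regular circulant graph, and let U = R(I ⊗ G) be the arc-reversal Grover walk on X, where R reverses each arc and G = (1/2)J_4 - I_4 is the Grover coin. Then U^{2n}(e_0 ⊗ 𝟙/2) = e_n ⊗ 𝟙/2, i.e., the walk admits perfect state transfer from vertex 0 to vertex n at time 2n. -/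
open Matrix Complex

open scoped Kronecker

/-- The connection set `(a, b, -a, -b)` of the circulant graph `X(Z_{2n}, ±{a,b})`,
indexed by `Fin 4`.  The arc space is `Z_{2n} × Fin 4`, where `(u, k)` is the arc
from `u` to `u + s k`, grouped by tail vertex. -/
def conn (n a b : ℕ) : Fin 4 → ZMod (2 * n) :=
  ![(a : ZMod (2 * n)), (b : ZMod (2 * n)), -(a : ZMod (2 * n)), -(b : ZMod (2 * n))]

/-- The reverse of the arc `(u, k)` is `(u + s k, k + 2)`, since `s (k + 2) = - s k`. -/
def revArc (n a b : ℕ) (p : ZMod (2 * n) × Fin 4) : ZMod (2 * n) × Fin 4 :=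
  (p.1 + conn n a b p.2, p.2 + 2)

/-- The arc-reversal permutation matrix `R`. -/
def arcReversal (n a b : ℕ) :
    Matrix (ZMod (2 * n) × Fin 4) (ZMod (2 * n) × Fin 4) ℂ :=
  Matrix.of fun p q => if q = revArc n a b p then 1 else 0

/-- The `4 × 4` Grover coin `(1/2) J₄ - I₄`. -/
noncomputable def grover4 : Matrix (Fin 4) (Fin 4) ℂ :=
  (1 / 2 : ℂ) • Matrix.of (fun _ _ => 1) - 1

/-- The transition matrix `U = R (I ⊗ G)` of the arc-reversal Grover walk. -/
noncomputable def walkU (n a b : ℕ) [NeZero n] :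
    Matrix (ZMod (2 * n) × Fin 4) (ZMod (2 * n) × Fin 4) ℂ :=
  arcReversal n a b * ((1 : Matrix (ZMod (2 * n)) (ZMod (2 * n)) ℂ) ⊗ₖ grover4)

/-- The uniform superposition `e_u ⊗ 𝟙 / 2` over the four outgoing arcs at vertex `u`. -/
noncomputable def uniformAt (n : ℕ) (u : ZMod (2 * n)) : ZMod (2 * n) × Fin 4 → ℂ :=
  fun p => if p.1 = u then 1 / 2 else 0


/-! The initial state splits as `(1/4) (D ⊗ 𝟙 + h ⊗ (1,0,0,1) + h ⊗ (0,1,1,0))` with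
`D = e₀ - eₙ` and `h = e₀ + eₙ`. Since `b = n - a`, the connection set is `(a, n - a, -a, n + a)`
in `Z_{2n}`, so the walk acts on the three pieces separately: on a function `h` that is
`n`-periodic, the arcs `0, 3` carry `h` rigidly by `-a` per step and the arcs `1, 2` carry it
by `+a`, so both pieces return after `2n` steps; and on an `n`-antiperiodic `D` the neighbour
sums vanish, so `U² (D ⊗ 𝟙) = -(D ⊗ 𝟙)`. As `n` is odd, `U^{2n}` flips the sign of `D` only,
which turns `e₀ + eₙ + (e₀ - eₙ)` into `e₀ + eₙ - (e₀ - eₙ) = 2 eₙ`. -/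

open Function

def tensorVec {α β : Type*} (f : α → ℂ) (w : β → ℂ) : α × β → ℂ :=
  fun p => f p.1 * w p.2

section ZModTwoMul

variable {n : ℕ}

lemma natCast_add_natCast_self : (n : ZMod (2 * n)) + n = 0 := by
  have h := ZMod.natCast_self (2 * n)
  push_cast at h
  linear_combination h

lemma neg_natCast_self : -(n : ZMod (2 * n)) = n :=
  neg_eq_of_add_eq_zero_left natCast_add_natCast_self

end ZModTwoMul

section Walk

variable {n a b : ℕ}

lemma conn_add_two (k : Fin 4) : conn n a b (k + 2) = -conn n a b k := by
  fin_cases k <;> simp [conn]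

lemma conn_eq_of_add_eq (hsum : a + b = n) :
    conn n a b = ![(a : ZMod (2 * n)), -a + n, -a, a + n] := by
  have hb : (b : ZMod (2 * n)) = n - a := by rw [← hsum]; push_cast; ring
  ext k
  fin_cases k <;> simp [conn, hb, sub_eq_add_neg, neg_natCast_self, add_comm]

lemma sum_conn_eq_zero_of_antiperiodic (hsum : a + b = n) {f : ZMod (2 * n) → ℂ}
    (hf : Antiperiodic f n) (x : ZMod (2 * n)) : ∑ l, f (x + conn n a b l) = 0 := by
  have hback : f (x + (-a + n)) = -f (x + -a) := by rw [← add_assoc, hf]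
  have hfwd : f (x + (a + n)) = -f (x + a) := by rw [← add_assoc, hf]
  simp only [conn_eq_of_add_eq hsum, Fin.sum_univ_four, Matrix.cons_val, hback, hfwd]
  ring

variable [NeZero n]

lemma walkU_mulVec_apply (v : ZMod (2 * n) × Fin 4 → ℂ) (u : ZMod (2 * n)) (k : Fin 4) :
    (walkU n a b).mulVec v (u, k) =
      1 / 2 * ∑ l, v (u + conn n a b k, l) - v (u + conn n a b k, k + 2) := by
  rw [walkU, ← mulVec_mulVec]
  have hR : (arcReversal n a b).mulVec
      (((1 : Matrix (ZMod (2 * n)) (ZMod (2 * n)) ℂ) ⊗ₖ grover4).mulVec v) (u, k) =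
        (((1 : Matrix (ZMod (2 * n)) (ZMod (2 * n)) ℂ) ⊗ₖ grover4).mulVec v)
          (u + conn n a b k, k + 2) := by
    simp only [arcReversal, mulVec, dotProduct, of_apply, ite_mul, one_mul, zero_mul]
    rw [Finset.sum_ite_eq' Finset.univ (revArc n a b (u, k))]
    simp [revArc]
  rw [hR]
  simp only [mulVec, dotProduct, Fintype.sum_prod_type, kroneckerMap_apply, one_apply, ite_mul,
    one_mul, zero_mul]
  rw [Finset.sum_comm]
  simp [Finset.sum_ite_eq, grover4, sub_mul, Finset.sum_sub_distrib, Finset.mul_sum, one_apply]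

lemma walkU_mulVec_tensorVec_one (f : ZMod (2 * n) → ℂ) :
    (walkU n a b).mulVec (tensorVec f 1) = fun p => f (p.1 + conn n a b p.2) := by
  ext ⟨u, k⟩
  simp only [walkU_mulVec_apply, tensorVec, Pi.one_apply, mul_one, Finset.sum_const,
    Finset.card_univ, Fintype.card_fin, nsmul_eq_mul]
  push_cast
  ring

lemma walkU_mulVec_shift (f : ZMod (2 * n) → ℂ) :
    (walkU n a b).mulVec (fun p => f (p.1 + conn n a b p.2)) =
      fun p => 1 / 2 * ∑ l, f (p.1 + conn n a b p.2 + conn n a b l) - f p.1 := by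
  ext ⟨u, k⟩
  rw [walkU_mulVec_apply, conn_add_two, add_neg_cancel_right]

lemma walkU_sq_mulVec_antiperiodic (hsum : a + b = n) {f : ZMod (2 * n) → ℂ}
    (hf : Antiperiodic f n) :
    (walkU n a b ^ 2).mulVec (tensorVec f 1) = -tensorVec f 1 := by
  rw [sq, ← mulVec_mulVec, walkU_mulVec_tensorVec_one, walkU_mulVec_shift]
  ext ⟨u, k⟩
  simp [sum_conn_eq_zero_of_antiperiodic hsum hf, tensorVec]

lemma walkU_pow_mulVec_antiperiodic (hsum : a + b = n) {f : ZMod (2 * n) → ℂ}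
    (hf : Antiperiodic f n) (m : ℕ) :
    (walkU n a b ^ (2 * m)).mulVec (tensorVec f 1) = (-1 : ℂ) ^ m • tensorVec f 1 := by
  induction m with
  | zero => simp
  | succ m ih =>
    rw [mul_add_one, pow_add, ← mulVec_mulVec, walkU_sq_mulVec_antiperiodic hsum hf,
      mulVec_neg, ih, pow_succ, mul_neg_one, neg_smul]

lemma walkU_mulVec_pulse {f : ZMod (2 * n) → ℂ} {w : Fin 4 → ℂ} {t : ZMod (2 * n)}
    (hf : Periodic f n) (hw : ∀ k, w k + w (k + 2) = 1)
    (hs : ∀ k, w k ≠ 0 → conn n a b k = t ∨ conn n a b k = t + n) :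
    (walkU n a b).mulVec (tensorVec f w) = tensorVec (fun u => f (u + t)) w := by
  ext ⟨u, k⟩
  have hsum_w : ∑ l, w l = 2 := by
    have h0 := hw 0
    have h1 := hw 1
    simp only [Fin.sum_univ_four]
    simp only [show (0 : Fin 4) + 2 = 2 from rfl, show (1 : Fin 4) + 2 = 3 from rfl] at h0 h1
    linear_combination h0 + h1
  have hshift : f (u + conn n a b k) * w k = f (u + t) * w k := by
    by_cases hk : w k = 0
    · simp [hk]
    rcases hs k hk with h | h
    · rw [h]
    · rw [h, ← add_assoc, hf]
  rw [walkU_mulVec_apply]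
  simp only [tensorVec, ← Finset.mul_sum, hsum_w]
  linear_combination hshift - f (u + conn n a b k) * hw k

lemma walkU_pow_mulVec_pulse {f : ZMod (2 * n) → ℂ} {w : Fin 4 → ℂ} {t : ZMod (2 * n)}
    (hf : Periodic f n) (hw : ∀ k, w k + w (k + 2) = 1)
    (hs : ∀ k, w k ≠ 0 → conn n a b k = t ∨ conn n a b k = t + n) (m : ℕ) :
    (walkU n a b ^ m).mulVec (tensorVec f w) = tensorVec (fun u => f (u + m • t)) w := by
  induction m with
  | zero => simp
  | succ m ih =>
    rw [pow_succ', ← mulVec_mulVec, ih, walkU_mulVec_pulse (hf.add_const _) hw hs, succ_nsmul]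
    simp only [add_assoc, add_comm t]

lemma walkU_pow_mulVec_forward_pulse (hsum : a + b = n) {f : ZMod (2 * n) → ℂ}
    (hf : Periodic f n) (m : ℕ) :
    (walkU n a b ^ m).mulVec (tensorVec f ![1, 0, 0, 1]) =
      tensorVec (fun u => f (u + m • (a : ZMod (2 * n)))) ![1, 0, 0, 1] := by
  refine walkU_pow_mulVec_pulse hf (fun k => by fin_cases k <;> simp) (fun k hk => ?_) m
  rw [conn_eq_of_add_eq hsum]
  fin_cases k <;> simp_all

lemma walkU_pow_mulVec_backward_pulse (hsum : a + b = n) {f : ZMod (2 * n) → ℂ}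
    (hf : Periodic f n) (m : ℕ) :
    (walkU n a b ^ m).mulVec (tensorVec f ![0, 1, 1, 0]) =
      tensorVec (fun u => f (u + m • -(a : ZMod (2 * n)))) ![0, 1, 1, 0] := by
  refine walkU_pow_mulVec_pulse hf (fun k => by fin_cases k <;> simp) (fun k hk => ?_) m
  rw [conn_eq_of_add_eq hsum]
  fin_cases k <;> simp_all

end Walk

section Decomposition

variable (n : ℕ)

def antipodalSum : ZMod (2 * n) → ℂ :=
  fun u => (if u = 0 then 1 else 0) + (if u = n then 1 else 0)

def antipodalDiff : ZMod (2 * n) → ℂ :=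
  fun u => (if u = 0 then 1 else 0) - (if u = n then 1 else 0)

lemma add_natCast_eq_zero_iff (u : ZMod (2 * n)) : u + n = 0 ↔ u = n := by
  rw [add_eq_zero_iff_eq_neg, neg_natCast_self]

lemma antipodalSum_periodic : Periodic (antipodalSum n) n := by
  intro u
  simp only [antipodalSum, add_natCast_eq_zero_iff, add_eq_right]
  ring

lemma antipodalDiff_antiperiodic : Antiperiodic (antipodalDiff n) n := by
  intro u
  simp only [antipodalDiff, add_natCast_eq_zero_iff, add_eq_right]
  ring

lemma uniformAt_zero_eq : uniformAt n 0 = (1 / 4 : ℂ) • (tensorVec (antipodalDiff n) 1 +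
    tensorVec (antipodalSum n) ![1, 0, 0, 1] + tensorVec (antipodalSum n) ![0, 1, 1, 0]) := by
  ext ⟨u, k⟩
  fin_cases k <;>
    simp [uniformAt, tensorVec, antipodalSum, antipodalDiff] <;> split_ifs <;> norm_num

lemma uniformAt_natCast_eq : uniformAt n n = (1 / 4 : ℂ) • (-tensorVec (antipodalDiff n) 1 +
    tensorVec (antipodalSum n) ![1, 0, 0, 1] + tensorVec (antipodalSum n) ![0, 1, 1, 0]) := by
  ext ⟨u, k⟩
  fin_cases k <;>
    simp [uniformAt, tensorVec, antipodalSum, antipodalDiff] <;> split_ifs <;> norm_num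

end Decomposition

theorem stmt_19_general (n a b : ℕ) [NeZero n] (hodd : Odd n) (hsum : a + b = n) :
    (walkU n a b ^ (2 * n)).mulVec (uniformAt n 0) =
      uniformAt n ((n : ZMod (2 * n))) := by
  have hfull : ∀ t : ZMod (2 * n), (2 * n) • t = 0 := fun t => by
    rw [nsmul_eq_mul, ZMod.natCast_self, zero_mul]
  rw [uniformAt_zero_eq, mulVec_smul, mulVec_add, mulVec_add,
    walkU_pow_mulVec_antiperiodic hsum (antipodalDiff_antiperiodic n), hodd.neg_one_pow,
    walkU_pow_mulVec_forward_pulse hsum (antipodalSum_periodic n),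
    walkU_pow_mulVec_backward_pulse hsum (antipodalSum_periodic n), uniformAt_natCast_eq]
  simp only [hfull, add_zero, neg_one_smul]

/-- Perfect state transfer in the Grover walk on `X(Z_{2n}, ±{a,b})` from vertex `0`
to the antipodal vertex `n` at time `2n`. -/
theorem stmt_19 (n a b : ℕ) [NeZero n] (hodd : Odd n)
    (ha : 0 < a) (hb : 0 < b) (hab : a ≠ b) (hsum : a + b = n) :
    (walkU n a b ^ (2 * n)).mulVec (uniformAt n 0) =
      uniformAt n ((n : ZMod (2 * n))) :=
  stmt_19_general n a b hodd hsum
end
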